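/- arXiv:1405.7457 — 3 statements merged into one kernel-verified Lean document; each statement's English description precedes it below -/
import Mathlib

section
/- Every envelope point comes from a boundary point of the solid: if M ⊆ ℝ³ is compact and nonempty, I = [t₀,t₁], and A and b are continuous, then the envelope E = frontier(⋃_{t∈I} M(t)) is contained in ⋃_{t∈I} {A(t)·x + b(t) : x ∈ frontier M}. -/
open RealInnerProductSpace Matrix

/-- The action of a matrix on a point of `ℝ³ = EuclideanSpace ℝ (Fin 3)`. -/
noncomputable def act (A : Matrix (Fin 3) (Fin 3) ℝ) (x : EuclideanSpace ℝ (Fin 3)) :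
    EuclideanSpace ℝ (Fin 3) := Matrix.toEuclideanLin A x

/-!
The swept volume is the continuous image of the compact set `I × M`, hence closed, so an
envelope point is `A(t)·x + b(t)` for some `t ∈ I` and `x ∈ M`. Each rigid motion
`y ↦ A(t)·y + b(t)` is an open map, so it sends `interior M` into the interior of the swept
volume; an envelope point therefore comes from `M \ interior M = frontier M`.
-/

open Set Function

section Sweep

variable {ι X E F : Type*} [TopologicalSpace X] [TopologicalSpace E] [TopologicalSpace F]

theorem frontier_biUnion_image_subset {f : ι → E → F} (hf : ∀ i, IsOpenMap (f i))
    {s : Set ι} {M : Set E} (hclosed : IsClosed (⋃ i ∈ s, f i '' M)) :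
    frontier (⋃ i ∈ s, f i '' M) ⊆ ⋃ i ∈ s, f i '' (M \ interior M) := by
  intro p hp
  obtain ⟨i, hi, x, hxM, rfl⟩ : ∃ i ∈ s, ∃ x ∈ M, f i x = p := by
    simpa using hclosed.frontier_subset hp
  refine mem_biUnion hi ⟨x, ⟨hxM, fun hx => hp.2 ?_⟩, rfl⟩
  exact interior_mono (subset_biUnion_of_mem (u := fun i => f i '' M) hi)
    ((hf i).image_interior_subset M ⟨x, hx, rfl⟩)

theorem IsCompact.biUnion_image {g : X → E → F} (hg : Continuous (uncurry g)) {K : Set X}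
    (hK : IsCompact K) {M : Set E} (hM : IsCompact M) : IsCompact (⋃ t ∈ K, g t '' M) := by
  rw [iUnion_image_left, ← image_prod]
  exact (hK.prod hM).image hg

end Sweep

theorem continuous_act_uncurry : Continuous (uncurry act) := by
  change Continuous fun p : Matrix (Fin 3) (Fin 3) ℝ × EuclideanSpace ℝ (Fin 3) =>
    WithLp.toLp 2 (p.1 *ᵥ WithLp.ofLp p.2)
  fun_prop

theorem isOpenMap_act_add {A : Matrix (Fin 3) (Fin 3) ℝ} (hA : Aᵀ * A = 1)
    (c : EuclideanSpace ℝ (Fin 3)) : IsOpenMap fun y => act A y + c := by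
  have hsurj : Surjective (act A) := fun z => ⟨act Aᵀ z, by
    change WithLp.toLp 2 (A *ᵥ Aᵀ *ᵥ WithLp.ofLp z) = z
    rw [mulVec_mulVec, mul_eq_one_comm.mp hA, one_mulVec]⟩
  exact (isOpenMap_add_right c).comp (LinearMap.isOpenMap_of_finiteDimensional _ hsurj)

theorem envelope_subset_sweep_of_frontier_general
    (A : ℝ → Matrix (Fin 3) (Fin 3) ℝ) (b : ℝ → EuclideanSpace ℝ (Fin 3))
    (hA : ∀ t, (A t)ᵀ * A t = 1)
    (hAcont : Continuous A) (hbcont : Continuous b)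
    (M : Set (EuclideanSpace ℝ (Fin 3)))
    (hMcpt : IsCompact M)
    (t₀ t₁ : ℝ) :
    frontier (⋃ t ∈ Set.Icc t₀ t₁, (fun y => act (A t) y + b t) '' M) ⊆
      ⋃ t ∈ Set.Icc t₀ t₁, (fun y => act (A t) y + b t) '' frontier M := by
  have hmotion : Continuous (uncurry fun t y => act (A t) y + b t) :=
    (continuous_act_uncurry.comp ((hAcont.comp continuous_fst).prodMk continuous_snd)).add
      (hbcont.comp continuous_fst)
  have hclosed := ((isCompact_Icc (a := t₀) (b := t₁)).biUnion_image hmotion hMcpt).isClosed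
  rw [hMcpt.isClosed.frontier_eq]
  exact frontier_biUnion_image_subset (fun t => isOpenMap_act_add (hA t) (b t)) hclosed

/-- Every envelope point comes from a boundary point of the solid: if `M ⊆ ℝ³` is compact
and nonempty, `I = [t₀, t₁]`, and `A` and `b` are continuous, then the envelope
`E = frontier (⋃_{t ∈ I} M(t))` is contained in `⋃_{t ∈ I} {A(t)·x + b(t) : x ∈ frontier M}`. -/
theorem envelope_subset_sweep_of_frontier
    (A : ℝ → Matrix (Fin 3) (Fin 3) ℝ) (b : ℝ → EuclideanSpace ℝ (Fin 3))
    (hA : ∀ t, (A t)ᵀ * A t = 1)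
    (hAcont : Continuous A) (hbcont : Continuous b)
    (M : Set (EuclideanSpace ℝ (Fin 3)))
    (hMcpt : IsCompact M) (hMne : M.Nonempty)
    (t₀ t₁ : ℝ) (ht : t₀ < t₁) :
    frontier (⋃ t ∈ Set.Icc t₀ t₁, (fun y => act (A t) y + b t) '' M) ⊆
      ⋃ t ∈ Set.Icc t₀ t₁, (fun y => act (A t) y + b t) '' frontier M :=
  envelope_subset_sweep_of_frontier_general A b hA hAcont hbcont M hMcpt t₀ t₁
end

section
/- (Contrapositive form of Proposition 1, for a smooth boundary point modeled by a supporting half-space.) Let x ∈ M and let U be an open neighborhood of x and N ∈ ℝ³ a nonzero vector such that M ∩ U = {y ∈ ℝ³ : ⟨N, y − x⟩ ≤ 0} ∩ U. Assume A and b are continuous on ℝ and differentiable at t' ∈ I, and set v = γ_x'(t') and G = ⟨A(t')·N, v⟩. If either (t₀ < t' < t₁ and G ≠ 0), or (t' = t₀ and G > 0), or (t' = t₁ and G < 0), then γ_x(t') lies in the interior of the swept volume V = ⋃_{t∈I} M(t); in particular γ_x(t') is not on the envelope E. -/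
/-!
Put `p = γ_x(t')` and `F(s) = ⟪A(s)·N, p - γ_x(s)⟫`. Pulling back by the rigid motion at time `s`,
`F(s) = ⟪N, q(s) - x⟫` with `q(s) = A(s)ᵀ(p - b(s))`, so `F(s) < 0` together with `q(s) ∈ U` puts
`q(s)` in the open half-space part of `M ∩ U`, i.e. in the interior of `M`, and hence `p` in the
interior of `M(s)`. Now `F(t') = 0` and `F'(t') = -G`, so the sign condition on `G` makes `F`
negative at times `s ∈ I` arbitrarily close to `t'` on the admissible side, where `q(s)` is still
in `U` by continuity.
-/

open RealInnerProductSpace Matrix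

open Set Filter Topology

section HalfSpace

variable {E : Type*} [NormedAddCommGroup E] [InnerProductSpace ℝ E]

lemma setOf_inner_sub_neg_inter_subset_interior {M U : Set E} {N x : E} (hU : IsOpen U)
    (hMU : M ∩ U = {y | ⟪N, y - x⟫ ≤ 0} ∩ U) :
    {y | ⟪N, y - x⟫ < 0} ∩ U ⊆ interior M := by
  refine interior_maximal ?_ ?_
  · rintro y ⟨hyN : ⟪N, y - x⟫ < 0, hyU⟩
    have hyMU : y ∈ {y | ⟪N, y - x⟫ ≤ 0} ∩ U := ⟨hyN.le, hyU⟩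
    rw [← hMU] at hyMU
    exact hyMU.1
  · exact (isOpen_lt (continuous_const.inner (continuous_id.sub continuous_const))
      continuous_const).inter hU

end HalfSpace

lemma exists_mem_Icc_neg_and_of_hasDerivAt {F : ℝ → ℝ} {d a b t : ℝ} (hF : HasDerivAt F d t)
    (h0 : F t = 0) (ht : t ∈ Icc a b) (hd : (t < b ∧ d < 0) ∨ (a < t ∧ 0 < d))
    {P : ℝ → Prop} (hP : ∀ᶠ s in 𝓝 t, P s) : ∃ s ∈ Icc a b, F s < 0 ∧ P s := by
  rcases hd with ⟨htb, hd⟩ | ⟨hat, hd⟩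
  · have hsign := eventually_nhdsWithin_sign_eq_of_deriv_neg (hF.deriv ▸ hd) h0
    have hI : ∀ᶠ s in 𝓝[>] t, s ∈ Ioo t b := Ioo_mem_nhdsGT htb
    obtain ⟨s, hs, hFs, hPs⟩ := (hI.and (nhdsWithin_le_nhds (hsign.and hP))).exists
    refine ⟨s, ⟨ht.1.trans hs.1.le, hs.2.le⟩, ?_, hPs⟩
    rw [← sign_eq_neg_one_iff, hFs, sign_eq_neg_one_iff, sub_neg]
    exact hs.1
  · have hsign := eventually_nhdsWithin_sign_eq_of_deriv_pos (hF.deriv ▸ hd) h0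
    have hI : ∀ᶠ s in 𝓝[<] t, s ∈ Ioo a t := Ioo_mem_nhdsLT hat
    obtain ⟨s, hs, hFs, hPs⟩ := (hI.and (nhdsWithin_le_nhds (hsign.and hP))).exists
    refine ⟨s, ⟨hs.1.le, hs.2.le.trans ht.2⟩, ?_, hPs⟩
    rw [← sign_eq_neg_one_iff, hFs, sign_eq_neg_one_iff, sub_neg]
    exact hs.2

section Act

lemma act_apply (A : Matrix (Fin 3) (Fin 3) ℝ) (w : EuclideanSpace ℝ (Fin 3)) (i : Fin 3) :
    act A w i = ∑ j, A i j * w j := by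
  simp [act, toLpLin_apply, Matrix.mulVec, dotProduct]

lemma act_act (A B : Matrix (Fin 3) (Fin 3) ℝ) (w : EuclideanSpace ℝ (Fin 3)) :
    act A (act B w) = act (A * B) w := by
  simp [act, toLpLin_apply, Matrix.mulVec_mulVec]

lemma act_sub (A : Matrix (Fin 3) (Fin 3) ℝ) (u w : EuclideanSpace ℝ (Fin 3)) :
    act A (u - w) = act A u - act A w :=
  map_sub _ u w

lemma act_one (w : EuclideanSpace ℝ (Fin 3)) : act 1 w = w := by
  simp [act]

lemma inner_act_transpose (A : Matrix (Fin 3) (Fin 3) ℝ) (u w : EuclideanSpace ℝ (Fin 3)) :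
    ⟪u, act Aᵀ w⟫ = ⟪act A u, w⟫ := by
  rw [act, ← conjTranspose_eq_transpose_of_trivial, toEuclideanLin_conjTranspose_eq_adjoint,
    LinearMap.adjoint_inner_right, act]

lemma continuous_act (A : Matrix (Fin 3) (Fin 3) ℝ) : Continuous (act A) :=
  (Matrix.toEuclideanLin A).continuous_of_finiteDimensional

lemma continuousAt_act {A : ℝ → Matrix (Fin 3) (Fin 3) ℝ} {w : ℝ → EuclideanSpace ℝ (Fin 3)}
    {t : ℝ} (hA : ContinuousAt A t) (hw : ContinuousAt w t) :
    ContinuousAt (fun s => act (A s) (w s)) t := by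
  have hact : Continuous fun P : Matrix (Fin 3) (Fin 3) ℝ × EuclideanSpace ℝ (Fin 3) =>
      WithLp.toLp 2 (P.1 *ᵥ WithLp.ofLp P.2) :=
    (PiLp.continuous_toLp 2 (fun _ : Fin 3 => ℝ)).comp
      (continuous_fst.matrix_mulVec ((PiLp.continuous_ofLp 2 (fun _ : Fin 3 => ℝ)).comp
        continuous_snd))
  exact hact.continuousAt.comp (hA.prodMk hw)

lemma differentiableAt_act {A : ℝ → Matrix (Fin 3) (Fin 3) ℝ} {t : ℝ}
    (hA : ∀ i j, DifferentiableAt ℝ (fun s => A s i j) t) (w : EuclideanSpace ℝ (Fin 3)) :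
    DifferentiableAt ℝ (fun s => act (A s) w) t := by
  refine differentiableAt_euclidean.2 fun i => ?_
  simp only [act_apply]
  exact DifferentiableAt.fun_sum fun j _ => (hA i j).mul_const _

variable {A : Matrix (Fin 3) (Fin 3) ℝ} (hA : Aᵀ * A = 1)
include hA

lemma inner_act_transpose_sub_sub (N x c p : EuclideanSpace ℝ (Fin 3)) :
    ⟪N, act Aᵀ (p - c) - x⟫ = ⟪act A N, p - (act A x + c)⟫ := by
  have hpull : act Aᵀ (p - c) - x = act Aᵀ (p - (act A x + c)) := by
    rw [show p - (act A x + c) = p - c - act A x by abel, act_sub _ (p - c), act_act, hA, act_one]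
  rw [hpull, inner_act_transpose]

lemma mem_interior_image_of_act_transpose_mem_interior {M : Set (EuclideanSpace ℝ (Fin 3))}
    (c : EuclideanSpace ℝ (Fin 3)) {p : EuclideanSpace ℝ (Fin 3)}
    (hp : act Aᵀ (p - c) ∈ interior M) :
    p ∈ interior ((fun y => act A y + c) '' M) := by
  have hinv : Continuous fun z => act Aᵀ (z - c) :=
    (continuous_act Aᵀ).comp (continuous_id.sub continuous_const)
  refine interior_maximal ?_ (isOpen_interior.preimage hinv) hp
  rintro z (hz : act Aᵀ (z - c) ∈ interior M)
  refine ⟨_, interior_subset hz, ?_⟩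
  simp only [act_act, mul_eq_one_comm.mp hA, act_one, sub_add_cancel]

end Act

theorem interior_of_sweep_of_smooth_nonzero_G_general
    (A : ℝ → Matrix (Fin 3) (Fin 3) ℝ) (b : ℝ → EuclideanSpace ℝ (Fin 3))
    (hA : ∀ t, (A t)ᵀ * A t = 1)
    (M : Set (EuclideanSpace ℝ (Fin 3)))
    (t₀ t₁ : ℝ) (ht : t₀ < t₁)
    (x : EuclideanSpace ℝ (Fin 3))
    (U : Set (EuclideanSpace ℝ (Fin 3))) (hU : IsOpen U) (hxU : x ∈ U)
    (N : EuclideanSpace ℝ (Fin 3))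
    (hMU : M ∩ U = {y : EuclideanSpace ℝ (Fin 3) | ⟪N, y - x⟫ ≤ 0} ∩ U)
    (t' : ℝ) (ht' : t' ∈ Set.Icc t₀ t₁)
    (hAdiff : ∀ i j, DifferentiableAt ℝ (fun t => A t i j) t')
    (hbdiff : DifferentiableAt ℝ b t')
    (v : EuclideanSpace ℝ (Fin 3))
    (hv : HasDerivAt (fun t => act (A t) x + b t) v t')
    (hG : (t₀ < t' ∧ t' < t₁ ∧ ⟪act (A t') N, v⟫ ≠ 0) ∨
          (t' = t₀ ∧ 0 < ⟪act (A t') N, v⟫) ∨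
          (t' = t₁ ∧ ⟪act (A t') N, v⟫ < 0)) :
    act (A t') x + b t' ∈
        interior (⋃ t ∈ Set.Icc t₀ t₁, (fun y => act (A t) y + b t) '' M) ∧
      act (A t') x + b t' ∉
        frontier (⋃ t ∈ Set.Icc t₀ t₁, (fun y => act (A t) y + b t) '' M) := by
  set p := act (A t') x + b t'
  have hF : HasDerivAt (fun t => ⟪act (A t) N, p - (act (A t) x + b t)⟫)
      (-⟪act (A t') N, v⟫) t' := by
    simpa [p] using
      (differentiableAt_act hAdiff N).hasDerivAt.inner ℝ ((hasDerivAt_const t' p).sub hv)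
  have hq : ∀ᶠ t in 𝓝 t', act (A t)ᵀ (p - b t) ∈ U := by
    have hAt : ContinuousAt (fun t => (A t)ᵀ) t' :=
      continuousAt_pi.2 fun i => continuousAt_pi.2 fun j => (hAdiff j i).continuousAt
    have hqt : ContinuousAt (fun t => act (A t)ᵀ (p - b t)) t' :=
      continuousAt_act hAt (continuousAt_const.sub hbdiff.continuousAt)
    have hqx : act (A t')ᵀ (p - b t') = x := by
      simp only [p, add_sub_cancel_right, act_act, hA, act_one]
    exact hqt.preimage_mem_nhds (hqx ▸ hU.mem_nhds hxU)
  have hside : (t' < t₁ ∧ -⟪act (A t') N, v⟫ < 0) ∨ (t₀ < t' ∧ 0 < -⟪act (A t') N, v⟫) := by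
    rcases hG with ⟨h₀, h₁, hne⟩ | ⟨rfl, hpos⟩ | ⟨rfl, hneg⟩
    · rcases hne.lt_or_gt with h | h
      exacts [Or.inr ⟨h₀, by linarith⟩, Or.inl ⟨h₁, by linarith⟩]
    · exact Or.inl ⟨ht, by linarith⟩
    · exact Or.inr ⟨ht, by linarith⟩
  obtain ⟨s, hs, hFs, hqs⟩ := exists_mem_Icc_neg_and_of_hasDerivAt hF (by simp [p]) ht' hside hq
  have hneg : ⟪N, act (A s)ᵀ (p - b s) - x⟫ < 0 := by
    rwa [inner_act_transpose_sub_sub (hA s)]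
  have hint : p ∈ interior (⋃ t ∈ Set.Icc t₀ t₁, (fun y => act (A t) y + b t) '' M) :=
    interior_mono (subset_biUnion_of_mem hs) <|
      mem_interior_image_of_act_transpose_mem_interior (hA s) (b s) <|
        setOf_inner_sub_neg_inter_subset_interior hU hMU ⟨hneg, hqs⟩
  exact ⟨hint, fun hfr => hfr.2 hint⟩

/-- Contrapositive form of Proposition 1, for a smooth boundary point modeled by a
supporting half-space: if `M ∩ U = {y : ⟪N, y - x⟫ ≤ 0} ∩ U` near `x ∈ M` and the
function `G = ⟪A(t')·N, γ_x'(t')⟫` satisfies `G ≠ 0` at an interior time, `G > 0` at `t₀`,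
or `G < 0` at `t₁`, then `γ_x(t')` lies in the interior of the swept volume; in particular
it is not on the envelope. -/
theorem interior_of_sweep_of_smooth_nonzero_G
    (A : ℝ → Matrix (Fin 3) (Fin 3) ℝ) (b : ℝ → EuclideanSpace ℝ (Fin 3))
    (hA : ∀ t, (A t)ᵀ * A t = 1)
    (hAcont : Continuous A) (hbcont : Continuous b)
    (M : Set (EuclideanSpace ℝ (Fin 3)))
    (t₀ t₁ : ℝ) (ht : t₀ < t₁)
    (x : EuclideanSpace ℝ (Fin 3)) (hxM : x ∈ M)
    (U : Set (EuclideanSpace ℝ (Fin 3))) (hU : IsOpen U) (hxU : x ∈ U)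
    (N : EuclideanSpace ℝ (Fin 3)) (hN : N ≠ 0)
    (hMU : M ∩ U = {y : EuclideanSpace ℝ (Fin 3) | ⟪N, y - x⟫ ≤ 0} ∩ U)
    (t' : ℝ) (ht' : t' ∈ Set.Icc t₀ t₁)
    (hAdiff : ∀ i j, DifferentiableAt ℝ (fun t => A t i j) t')
    (hbdiff : DifferentiableAt ℝ b t')
    (v : EuclideanSpace ℝ (Fin 3))
    (hv : HasDerivAt (fun t => act (A t) x + b t) v t')
    (hG : (t₀ < t' ∧ t' < t₁ ∧ ⟪act (A t') N, v⟫ ≠ 0) ∨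
          (t' = t₀ ∧ 0 < ⟪act (A t') N, v⟫) ∨
          (t' = t₁ ∧ ⟪act (A t') N, v⟫ < 0)) :
    act (A t') x + b t' ∈
        interior (⋃ t ∈ Set.Icc t₀ t₁, (fun y => act (A t) y + b t) '' M) ∧
      act (A t') x + b t' ∉
        frontier (⋃ t ∈ Set.Icc t₀ t₁, (fun y => act (A t) y + b t) '' M) :=
  interior_of_sweep_of_smooth_nonzero_G_general A b hA M t₀ t₁ ht x U hU hxU N hMU t' ht' hAdiff
    hbdiff v hv hG
end

section
/- (Cross-product characterization of sharp-edge contact, Section 4.1.) Let w, N₁, N₂, v ∈ ℝ³ with w ≠ 0, N₁ and N₂ linearly independent, ⟨N₁, w⟩ = ⟨N₂, w⟩ = 0, and w × v ≠ 0. Let K = {α·N₁ + β·N₂ : α ≥ 0, β ≥ 0} be the cone spanned by N₁ and N₂. Then there exists a nonzero n ∈ K with ⟨n, v⟩ = 0 if and only if w × v ∈ K or −(w × v) ∈ K. -/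
/-!
Every `n` in the cone `K` of `N₁, N₂` is orthogonal to `w`; if also `⟪n, v⟫ = 0`, then `n` is
orthogonal to both `w` and `v`, so `n × (w × v) = ⟪n, v⟫ w - ⟪n, w⟫ v = 0` and `n` is a multiple
`t • (w × v)` of the nonzero vector `w × v`. Since `K` is closed under nonnegative scaling, the sign
of `t` decides whether `w × v` or `-(w × v)` lies in `K`. Conversely `w × v` is orthogonal to `v`.
-/

open RealInnerProductSpace Matrix

section PairCone

variable {E : Type*} [AddCommGroup E] [Module ℝ E]

def pairCone (x y : E) : Set E := {n | ∃ α β : ℝ, 0 ≤ α ∧ 0 ≤ β ∧ n = α • x + β • y}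

variable {x y n : E}

theorem smul_mem_pairCone {t : ℝ} (ht : 0 ≤ t) (hn : n ∈ pairCone x y) :
    t • n ∈ pairCone x y := by
  obtain ⟨α, β, hα, hβ, rfl⟩ := hn
  exact ⟨t * α, t * β, mul_nonneg ht hα, mul_nonneg ht hβ, by module⟩

theorem mem_or_neg_mem_pairCone_of_smul_mem {c : E} {t : ℝ} (ht : t ≠ 0)
    (h : t • c ∈ pairCone x y) : c ∈ pairCone x y ∨ -c ∈ pairCone x y := by
  rcases ht.lt_or_gt with ht | ht
  · right
    simpa [smul_smul, ht.ne] using smul_mem_pairCone (inv_nonneg.mpr (neg_nonneg.mpr ht.le)) h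
  · left
    simpa [smul_smul, ht.ne'] using smul_mem_pairCone (inv_nonneg.mpr ht.le) h

theorem inner_eq_zero_of_mem_pairCone {F : Type*} [NormedAddCommGroup F] [InnerProductSpace ℝ F]
    {x y n w : F} (hx : ⟪x, w⟫ = 0) (hy : ⟪y, w⟫ = 0) (hn : n ∈ pairCone x y) : ⟪n, w⟫ = 0 := by
  obtain ⟨α, β, -, -, rfl⟩ := hn
  simp [inner_add_left, real_inner_smul_left, hx, hy]

end PairCone

theorem exists_smul_cross_eq_of_dotProduct_eq_zero {F : Type*} [Field F] {u v n : Fin 3 → F}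
    (huv : u ⨯₃ v ≠ 0) (hu : n ⬝ᵥ u = 0) (hv : n ⬝ᵥ v = 0) : ∃ t : F, t • (u ⨯₃ v) = n := by
  have hcross : (u ⨯₃ v) ⨯₃ n = 0 := by
    rw [← cross_anticomm, cross_cross_eq_smul_sub_smul', hv, dotProduct_comm u, hu]
    simp
  by_contra! h
  exact crossProduct_ne_zero_iff_linearIndependent.mpr ((LinearIndependent.pair_iff' huv).mpr h)
    hcross

theorem EuclideanSpace.exists_smul_toLp_cross_eq_of_inner_eq_zero {u v n : EuclideanSpace ℝ (Fin 3)}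
    (huv : u ⨯₃ v ≠ 0) (hu : ⟪n, u⟫ = 0) (hv : ⟪n, v⟫ = 0) :
    ∃ t : ℝ, t • WithLp.toLp 2 (u ⨯₃ v) = n := by
  rw [real_inner_comm, EuclideanSpace.inner_eq_star_dotProduct, star_trivial] at hu hv
  obtain ⟨t, ht⟩ := exists_smul_cross_eq_of_dotProduct_eq_zero huv hu hv
  exact ⟨t, by rw [← WithLp.toLp_smul, ht, WithLp.toLp_ofLp]⟩

theorem EuclideanSpace.inner_toLp_cross_right (u v : EuclideanSpace ℝ (Fin 3)) :
    ⟪WithLp.toLp 2 (u ⨯₃ v), v⟫ = 0 := by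
  rw [EuclideanSpace.inner_eq_star_dotProduct, star_trivial]
  exact dot_cross_self u v

theorem cross_product_sharp_edge_contact_general
    (w N₁ N₂ v : EuclideanSpace ℝ (Fin 3))
    (hN₁w : ⟪N₁, w⟫ = 0) (hN₂w : ⟪N₂, w⟫ = 0)
    (hwv : crossProduct w v ≠ 0) :
    (∃ n ∈ {n : EuclideanSpace ℝ (Fin 3) |
        ∃ α β : ℝ, 0 ≤ α ∧ 0 ≤ β ∧ n = α • N₁ + β • N₂}, n ≠ 0 ∧ ⟪n, v⟫ = 0) ↔
      (WithLp.toLp 2 (crossProduct w v) ∈ {n : EuclideanSpace ℝ (Fin 3) |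
          ∃ α β : ℝ, 0 ≤ α ∧ 0 ≤ β ∧ n = α • N₁ + β • N₂} ∨
       WithLp.toLp 2 (-(crossProduct w v)) ∈ {n : EuclideanSpace ℝ (Fin 3) |
          ∃ α β : ℝ, 0 ≤ α ∧ 0 ≤ β ∧ n = α • N₁ + β • N₂}) := by
  change (∃ n ∈ pairCone N₁ N₂, n ≠ 0 ∧ ⟪n, v⟫ = 0) ↔
    (WithLp.toLp 2 (w ⨯₃ v) ∈ pairCone N₁ N₂ ∨ -WithLp.toLp 2 (w ⨯₃ v) ∈ pairCone N₁ N₂)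
  have hc : WithLp.toLp 2 (w ⨯₃ v) ≠ 0 := by simpa using hwv
  constructor
  · rintro ⟨n, hnK, hn0, hnv⟩
    obtain ⟨t, rfl⟩ := EuclideanSpace.exists_smul_toLp_cross_eq_of_inner_eq_zero hwv
      (inner_eq_zero_of_mem_pairCone hN₁w hN₂w hnK) hnv
    exact mem_or_neg_mem_pairCone_of_smul_mem (left_ne_zero_of_smul hn0) hnK
  · rintro (hK | hK)
    · exact ⟨_, hK, hc, EuclideanSpace.inner_toLp_cross_right w v⟩
    · refine ⟨_, hK, neg_ne_zero.mpr hc, ?_⟩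
      rw [inner_neg_left, EuclideanSpace.inner_toLp_cross_right, neg_zero]

/-- Cross-product characterization of sharp-edge contact (Section 4.1): with `w ≠ 0` the
edge tangent, `N₁, N₂` linearly independent normals orthogonal to `w`, `v` the velocity
with `w × v ≠ 0`, and `K = {α • N₁ + β • N₂ : α ≥ 0, β ≥ 0}` the cone spanned by `N₁` and
`N₂`, there exists a nonzero `n ∈ K` with `⟪n, v⟫ = 0` iff `w × v ∈ K` or `-(w × v) ∈ K`. -/
theorem cross_product_sharp_edge_contact
    (w N₁ N₂ v : EuclideanSpace ℝ (Fin 3))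
    (hw : w ≠ 0) (hli : LinearIndependent ℝ ![N₁, N₂])
    (hN₁w : ⟪N₁, w⟫ = 0) (hN₂w : ⟪N₂, w⟫ = 0)
    (hwv : crossProduct w v ≠ 0) :
    (∃ n ∈ {n : EuclideanSpace ℝ (Fin 3) |
        ∃ α β : ℝ, 0 ≤ α ∧ 0 ≤ β ∧ n = α • N₁ + β • N₂}, n ≠ 0 ∧ ⟪n, v⟫ = 0) ↔
      (WithLp.toLp 2 (crossProduct w v) ∈ {n : EuclideanSpace ℝ (Fin 3) |
          ∃ α β : ℝ, 0 ≤ α ∧ 0 ≤ β ∧ n = α • N₁ + β • N₂} ∨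
       WithLp.toLp 2 (-(crossProduct w v)) ∈ {n : EuclideanSpace ℝ (Fin 3) |
          ∃ α β : ℝ, 0 ≤ α ∧ 0 ≤ β ∧ n = α • N₁ + β • N₂}) :=
  cross_product_sharp_edge_contact_general w N₁ N₂ v hN₁w hN₂w hwv
end
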